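/- Let S be a stable cut in a graph G with φ(S) < (m−Δ)/2, and let u be its (unique) critical vertex, with u∈S. Then u has a neighbor w outside S with x_S(w)=0, i.e., d_S(w)=d(w)/2. -/

import Mathlib

open Finset

noncomputable section

variable {V : Type*} [Fintype V] [DecidableEq V]

/-- Total weight of edges crossing the cut `S` (each unordered crossing edge counted once). -/
def cutW (w : V → V → ℝ) (S : Finset V) : ℝ :=
  ∑ u ∈ S, ∑ v ∈ Sᶜ, w u v

/-- Weighted degree of a vertex. -/
def degW (w : V → V → ℝ) (v : V) : ℝ := ∑ u, w v u

/-- Total weight of crossing edges incident to `v`. -/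
def crossDegW (w : V → V → ℝ) (S : Finset V) (v : V) : ℝ :=
  ∑ u, if (v ∈ S ∧ u ∉ S) ∨ (u ∈ S ∧ v ∉ S) then w v u else 0

/-- Total weight of crossing edges incident to at least one vertex of `F`. -/
def crossDegSetW (w : V → V → ℝ) (S F : Finset V) : ℝ :=
  ∑ u ∈ S, ∑ v ∈ Sᶜ, if u ∈ F ∨ v ∈ F then w u v else 0

/-- Weight of edges crossing `S` that avoid `F`: the cut `S − F` in `G − F`. -/
def cutMinusW (w : V → V → ℝ) (S F : Finset V) : ℝ :=
  ∑ u ∈ S, ∑ v ∈ Sᶜ, if u ∉ F ∧ v ∉ F then w u v else 0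

/-- The cut obtained from `S` by moving `v` to the opposite side. -/
def flipCut (S : Finset V) (v : V) : Finset V :=
  if v ∈ S then S.erase v else insert v S

/-- The k-fault-tolerant value of the cut `S` against an adaptive adversary. -/
noncomputable def ftValW (w : V → V → ℝ) (S : Finset V) (k : ℕ) : ℝ :=
  sInf ((fun F => cutMinusW w S F) '' {F : Finset V | F.card = k})

/-- The single-fault FT value of the cut `S`. -/
noncomputable def ft1W (w : V → V → ℝ) (S : Finset V) : ℝ :=
  sInf (Set.range fun v => cutMinusW w S {v})

/-- Total edge weight of the graph. -/
def totalW (w : V → V → ℝ) : ℝ := (∑ u, ∑ v, w u v) / 2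

/-- Maximum weighted degree. -/
noncomputable def maxDegW (w : V → V → ℝ) : ℝ := sSup (Set.range (degW w))


/-!
Suppose every neighbour of `u` outside `S` has positive excess `x_S = d_S − d/2`. By stability
and integrality every excess is a nonnegative multiple of `1/2`, so these neighbours have excess
at least `1/2` and `d_S(u) ≤ 2 ∑_{v ∉ S} x_S(v)`. Adding `x_S(u)` and using
`∑_v x_S(v) = 2 C_S − m` gives `(3/2) d_S(u) − d(u)/2 ≤ 2 C_S − m`, whereas
`φ(S) = C_S − d_S(u) < (m − Δ)/2` gives `2 C_S − m < 2 d_S(u) − d(u)`. Together they force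
`d(u) < d_S(u)`, which is absurd.
-/

/-- The paper's `x_S(v)`. -/
def excessW (w : V → V → ℝ) (S : Finset V) (v : V) : ℝ :=
  crossDegW w S v - degW w v / 2

omit [Fintype V] [DecidableEq V] in
theorem exists_nat_sum_eq_of_zero_or_one {ι : Type*} (s : Finset ι) (f : ι → ℝ)
    (h : ∀ i, f i = 0 ∨ f i = 1) : ∃ n : ℕ, ∑ i ∈ s, f i = n := by
  classical
  refine ⟨#(s.filter (f · = 1)), ?_⟩
  rw [Finset.natCast_card_filter]
  refine Finset.sum_congr rfl fun i _ => ?_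
  rcases h i with hi | hi <;> simp [hi]

theorem natCast_sub_half_eq_zero_or_half_le {a b : ℕ} (h : ((b : ℝ) - 1) / 2 < a) :
    (a : ℝ) - b / 2 = 0 ∨ 1 / 2 ≤ (a : ℝ) - b / 2 := by
  have hb : b < 2 * a + 1 := by exact_mod_cast (by linarith : (b : ℝ) < 2 * a + 1)
  rcases Nat.lt_succ_iff_lt_or_eq.mp hb with hlt | heq
  · right
    have : (b : ℝ) + 1 ≤ 2 * a := by exact_mod_cast hlt
    linarith
  · left
    rw [heq]
    push_cast
    ring

section

variable {w : V → V → ℝ} {S : Finset V}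

theorem crossDegW_of_mem {a : V} (ha : a ∈ S) : crossDegW w S a = ∑ b ∈ Sᶜ, w a b := by
  rw [crossDegW, ← Finset.sum_filter]
  congr 1
  ext b
  simp [ha]

theorem crossDegW_of_notMem {a : V} (ha : a ∉ S) : crossDegW w S a = ∑ b ∈ S, w a b := by
  rw [crossDegW, ← Finset.sum_filter]
  congr 1
  ext b
  simp [ha]

theorem crossDegW_le_degW (hw : ∀ a b, 0 ≤ w a b) (v : V) : crossDegW w S v ≤ degW w v :=
  Finset.sum_le_sum fun b _ => by split_ifs <;> simp [hw v b]

omit [DecidableEq V] in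
theorem degW_le_maxDegW (v : V) : degW w v ≤ maxDegW w :=
  le_csSup (Set.finite_range _).bddAbove ⟨v, rfl⟩

theorem cutMinusW_singleton {u : V} (hu : u ∈ S) :
    cutMinusW w S {u} = cutW w S - crossDegW w S u := by
  rw [cutW, crossDegW_of_mem hu, ← Finset.add_sum_erase S _ hu, add_sub_cancel_left, cutMinusW,
    ← Finset.add_sum_erase S _ hu]
  simp only [Finset.mem_singleton, not_true_eq_false, false_and, if_false, Finset.sum_const_zero,
    zero_add]
  refine Finset.sum_congr rfl fun a ha => Finset.sum_congr rfl fun b hb => if_pos ⟨?_, ?_⟩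
  · exact Finset.ne_of_mem_erase ha
  · rintro rfl
    exact Finset.mem_compl.mp hb hu

theorem sum_crossDegW (hsym : ∀ a b, w a b = w b a) : ∑ v, crossDegW w S v = 2 * cutW w S := by
  rw [← Finset.sum_add_sum_compl S, Finset.sum_congr rfl fun a ha => crossDegW_of_mem ha,
    Finset.sum_congr rfl fun a ha => crossDegW_of_notMem (Finset.mem_compl.mp ha),
    Finset.sum_comm (s := Sᶜ), cutW]
  simp only [hsym _ _]
  ring

omit [DecidableEq V] in
theorem sum_degW : ∑ v, degW w v = 2 * totalW w := by
  simp only [degW, totalW]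
  ring

theorem sum_excessW (hsym : ∀ a b, w a b = w b a) :
    ∑ v, excessW w S v = 2 * cutW w S - totalW w := by
  simp only [excessW, Finset.sum_sub_distrib, ← Finset.sum_div, sum_crossDegW hsym, sum_degW]
  ring

theorem excessW_eq_zero_or_half_le (h01 : ∀ a b, w a b = 0 ∨ w a b = 1) {v : V}
    (hv : (degW w v - 1) / 2 < crossDegW w S v) :
    excessW w S v = 0 ∨ 1 / 2 ≤ excessW w S v := by
  obtain ⟨a, ha⟩ : ∃ a : ℕ, crossDegW w S v = a :=
    exists_nat_sum_eq_of_zero_or_one univ _ fun b =>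
      show (if (v ∈ S ∧ b ∉ S) ∨ (b ∈ S ∧ v ∉ S) then w v b else 0) = 0 ∨ _ = 1 by
        split_ifs
        exacts [h01 v b, Or.inl rfl]
  obtain ⟨d, hd⟩ : ∃ d : ℕ, degW w v = d := exists_nat_sum_eq_of_zero_or_one univ _ (h01 v)
  rw [ha, hd] at hv
  rw [excessW, ha, hd]
  exact natCast_sub_half_eq_zero_or_half_le hv

theorem crossDegW_le_two_mul_sum_compl_excessW (h01 : ∀ a b, w a b = 0 ∨ w a b = 1) {u : V}
    (hu : u ∈ S) (hnonneg : ∀ v, 0 ≤ excessW w S v)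
    (hnbr : ∀ v ∉ S, w u v = 1 → 1 / 2 ≤ excessW w S v) :
    crossDegW w S u ≤ 2 * ∑ v ∈ Sᶜ, excessW w S v := by
  rw [crossDegW_of_mem hu, Finset.mul_sum]
  gcongr with v hv
  rcases h01 u v with h | h
  · linarith [hnonneg v]
  · linarith [hnbr v (Finset.mem_compl.mp hv) h]

end

theorem stmt_7_general (w : V → V → ℝ) (hsym : ∀ u v, w u v = w v u)
    (h01 : ∀ u v, w u v = 0 ∨ w u v = 1)
    (S : Finset V)
    (hstable : ∀ v, (degW w v - 1) / 2 < crossDegW w S v)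
    (hft : ft1W w S < (totalW w - maxDegW w) / 2)
    (u : V) (hu : u ∈ S) (hcrit : cutMinusW w S {u} = ft1W w S) :
    ∃ x : V, w u x = 1 ∧ x ∉ S ∧ crossDegW w S x = degW w x / 2 := by
  by_contra! hcon
  have hw : ∀ a b, 0 ≤ w a b := fun a b => by rcases h01 a b with h | h <;> simp [h]
  have hexc := fun v => excessW_eq_zero_or_half_le h01 (hstable v)
  have hnonneg : ∀ v, 0 ≤ excessW w S v := fun v =>
    (hexc v).elim (fun h => h.ge) fun h => by linarith
  have hnbr : ∀ v ∉ S, w u v = 1 → 1 / 2 ≤ excessW w S v := fun v hv huv =>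
    (hexc v).resolve_left fun h => hcon v huv hv (sub_eq_zero.mp h)
  have hcross := crossDegW_le_two_mul_sum_compl_excessW h01 hu hnonneg hnbr
  have hsplit : ∑ v ∈ Sᶜ, excessW w S v + excessW w S u ≤ 2 * cutW w S - totalW w := by
    rw [← sum_excessW hsym, ← Finset.sum_compl_add_sum S]
    gcongr
    exact Finset.single_le_sum (fun v _ => hnonneg v) hu
  rw [← hcrit, cutMinusW_singleton hu] at hft
  linarith [degW_le_maxDegW (w := w) u, crossDegW_le_degW (S := S) hw u, show
    excessW w S u = crossDegW w S u - degW w u / 2 from rfl]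

theorem stmt_7 [Nonempty V] (w : V → V → ℝ) (hsym : ∀ u v, w u v = w v u)
    (h01 : ∀ u v, w u v = 0 ∨ w u v = 1) (hdiag : ∀ v, w v v = 0)
    (S : Finset V)
    (hstable : ∀ v, (degW w v - 1) / 2 < crossDegW w S v)
    (hft : ft1W w S < (totalW w - maxDegW w) / 2)
    (u : V) (hu : u ∈ S) (hcrit : cutMinusW w S {u} = ft1W w S) :
    ∃ x : V, w u x = 1 ∧ x ∉ S ∧ crossDegW w S x = degW w x / 2 :=
  stmt_7_general w hsym h01 S hstable hft u hu hcrit
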